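/- Let L and L' be finite-dimensional 5-graded Lie algebras over a field k of characteristic different from 2 and 3, and let f : L → L' be a Lie algebra homomorphism with f(L_i) ⊆ L'_i for all i, such that the restriction f|_{L_i} : L_i → L'_i is bijective for each i ∈ {1, −1, 2, −2}. Fix σ ∈ {1, −1}. If x ∈ L_σ and s ∈ L_{2σ} are such that x + s is algebraic in L, then f(x) + f(s) is algebraic in L'. -/

import Mathlib

/-
Put v' = f x + f s and E' = ∑_{i<5} (ad v')ⁱ / i!. Grade L' by σ-weight σ·j; then ad v' raises the
σ-weight filtration by at least one step, and all weights lie in [-2, 2], so (ad v')⁵ = 0 and E'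
is invertible. It remains to check E'⁅a, b⁆ = ⁅E' a, E' b⁆ for homogeneous a ∈ L'_m, b ∈ L'_n.
If σ(m + n) ≥ -2, the Leibniz rule expresses the difference of the two sides through terms
⁅(ad v')ⁱ a, (ad v')ʲ b⁆ / (i! j!) with i + j ≥ 5, which have σ-weight ≥ 3 and hence vanish;
here char k ≠ 2, 3 makes the factorials up to 4! invertible. If σ(m + n) ≤ -3, both m and n lie
in {-σ, -2σ}, where f is onto; since f intertwines the truncated exponential of ad (x + s) with
E', multiplicativity of the automorphism of L transfers to E'.
-/

open Finset LieAlgebra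

section TruncatedExponential

variable {k M : Type*} [Field k] [AddCommGroup M] [Module k M]

def truncExp (N : ℕ) (D : Module.End k M) : Module.End k M :=
  ∑ i ∈ range N, ((i.factorial : k)⁻¹) • D ^ i

theorem isUnit_truncExp {N : ℕ} (hN : 0 < N) {D : Module.End k M} (hD : IsNilpotent D) :
    IsUnit (truncExp N D) := by
  obtain ⟨N, rfl⟩ := Nat.exists_eq_succ_of_ne_zero hN.ne'
  set P : Module.End k M := ∑ i ∈ range N, (((i + 1).factorial : k)⁻¹) • D ^ i
  have hP : truncExp (N + 1) D = D * P + 1 := by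
    rw [truncExp, sum_range_succ', mul_sum]
    simp only [pow_succ', mul_smul_comm, Nat.factorial_zero, Nat.cast_one, inv_one, pow_zero,
      one_smul]
  rw [hP]
  exact ((Commute.sum_right _ _ _ fun i _ => ((Commute.refl D).pow_right i).smul_right _)
    |>.isNilpotent_mul_right hD).isUnit_add_one

theorem inv_factorial_mul_choose {n i : ℕ} (hi : i ≤ n) (hn : (n.factorial : k) ≠ 0) :
    (n.factorial : k)⁻¹ * n.choose i = (i.factorial : k)⁻¹ * ((n - i).factorial : k)⁻¹ := by
  have hcast : (n.choose i : k) * i.factorial * (n - i).factorial = n.factorial := by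
    rw [← Nat.choose_mul_factorial_mul_factorial hi, Nat.cast_mul, Nat.cast_mul]
  rw [← hcast] at hn ⊢
  obtain ⟨⟨h₀, h₁⟩, h₂⟩ := mul_ne_zero_iff.mp hn |>.imp_left mul_ne_zero_iff.mp
  field_simp

theorem natCast_factorial_ne_zero_of_lt_five (h2 : (2 : k) ≠ 0) (h3 : (3 : k) ≠ 0) {n : ℕ}
    (hn : n < 5) : (n.factorial : k) ≠ 0 := by
  have h24 : (Nat.factorial 4 : k) ≠ 0 := by
    rw [show (Nat.factorial 4 : k) = 2 ^ 3 * 3 by norm_num [Nat.factorial]]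
    exact mul_ne_zero (pow_ne_zero 3 h2) h3
  exact ne_zero_of_dvd_ne_zero h24 (Nat.cast_dvd_cast (Nat.factorial_dvd_factorial (by omega)))

variable {L L' : Type*} [LieRing L] [LieAlgebra k L] [LieRing L'] [LieAlgebra k L']

theorem truncExp_ad_lie {N : ℕ} (hN : ∀ n < N, (n.factorial : k) ≠ 0) {v a b : L}
    (hvanish : ∀ i < N, ∀ j < N, N ≤ i + j → ⁅(ad k L v ^ i) a, (ad k L v ^ j) b⁆ = 0) :
    truncExp N (ad k L v) ⁅a, b⁆ = ⁅truncExp N (ad k L v) a, truncExp N (ad k L v) b⁆ := by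
  let T : ℕ → ℕ → L := fun i j =>
    ((i.factorial : k)⁻¹ * (j.factorial : k)⁻¹) • ⁅(ad k L v ^ i) a, (ad k L v ^ j) b⁆
  calc truncExp N (ad k L v) ⁅a, b⁆
      = ∑ n ∈ range N, ∑ i ∈ range (n + 1), T i (n - i) := by
        simp only [truncExp, LinearMap.sum_apply, LinearMap.smul_apply]
        refine sum_congr rfl fun n hn => ?_
        rw [ad_pow_lie, Nat.sum_antidiagonal_eq_sum_range_succ
          (fun i j => n.choose i • ⁅(ad k L v ^ i) a, (ad k L v ^ j) b⁆), smul_sum]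
        refine sum_congr rfl fun i hi => ?_
        rw [mem_range] at hn hi
        rw [← Nat.cast_smul_eq_nsmul k, smul_smul,
          inv_factorial_mul_choose (Nat.lt_succ_iff.mp hi) (hN n hn)]
    _ = ∑ i ∈ range N, ∑ j ∈ range (N - i), T i j := sum_range_diag_flip N T
    _ = ∑ i ∈ range N, ∑ j ∈ range N, T i j := by
        refine sum_congr rfl fun i hi => ?_
        rw [← sum_range_add_sum_Ico _ (Nat.sub_le N i), left_eq_add]
        refine sum_eq_zero fun j hj => ?_
        rw [mem_range] at hi
        rw [mem_Ico] at hj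
        simp only [T, hvanish i hi j hj.2 (by omega), smul_zero]
    _ = ⁅truncExp N (ad k L v) a, truncExp N (ad k L v) b⁆ := by
        simp only [truncExp, LinearMap.sum_apply, LinearMap.smul_apply, sum_lie, lie_sum,
          smul_lie, lie_smul, smul_sum, smul_smul, T]
        rw [sum_comm]
        simp only [mul_comm]

theorem LieHom.map_ad_pow_apply (f : L →ₗ⁅k⁆ L') (v a : L) (m : ℕ) :
    f ((ad k L v ^ m) a) = (ad k L' (f v) ^ m) (f a) := by
  induction m with
  | zero => rfl
  | succ m ih =>
    simp only [pow_succ', Module.End.mul_apply, ad_apply, LieHom.map_lie, ih]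

theorem LieHom.map_truncExp_ad_apply (f : L →ₗ⁅k⁆ L') (N : ℕ) (v a : L) :
    f (truncExp N (ad k L v) a) = truncExp N (ad k L' (f v)) (f a) := by
  simp only [truncExp, LinearMap.sum_apply, LinearMap.smul_apply, map_sum, map_smul,
    f.map_ad_pow_apply]

end TruncatedExponential

section WeightFiltration

variable {k : Type*} [CommRing k] {M : Type*} [LieRing M] [LieAlgebra k M]
  (Mc : ℤ → Submodule k M) (σ : ℤ)

def weightFiltration (p : ℤ) : Submodule k M :=
  ⨆ j : {j : ℤ // p ≤ σ * j}, Mc j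

variable {Mc σ}

theorem le_weightFiltration {p j : ℤ} (h : p ≤ σ * j) : Mc j ≤ weightFiltration Mc σ p :=
  le_iSup (fun j : {j : ℤ // p ≤ σ * j} => Mc j) ⟨j, h⟩

theorem weightFiltration_antitone : Antitone (weightFiltration Mc σ) :=
  fun _ _ hpq => iSup_le fun j => le_weightFiltration (hpq.trans j.2)

theorem lie_mem_weightFiltration (hbr : ∀ i j : ℤ, ∀ x ∈ Mc i, ∀ y ∈ Mc j, ⁅x, y⁆ ∈ Mc (i + j))
    {p q : ℤ} {u w : M} (hu : u ∈ weightFiltration Mc σ p) (hw : w ∈ weightFiltration Mc σ q) :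
    ⁅u, w⁆ ∈ weightFiltration Mc σ (p + q) := by
  refine Submodule.iSup_induction _ (motive := fun u => ⁅u, w⁆ ∈ _) hu (fun i u hu => ?_)
    (by simp) fun u₁ u₂ h₁ h₂ => by rw [add_lie]; exact add_mem h₁ h₂
  refine Submodule.iSup_induction _ (motive := fun w => ⁅u, w⁆ ∈ _) hw (fun j w hw => ?_)
    (by simp) fun w₁ w₂ h₁ h₂ => by rw [lie_add]; exact add_mem h₁ h₂
  exact le_weightFiltration (by rw [mul_add]; exact add_le_add i.2 j.2) (hbr i j u hu w hw)

theorem ad_pow_mem_weightFiltration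
    (hbr : ∀ i j : ℤ, ∀ x ∈ Mc i, ∀ y ∈ Mc j, ⁅x, y⁆ ∈ Mc (i + j))
    {v u : M} {p : ℤ} (hv : v ∈ weightFiltration Mc σ 1) (hu : u ∈ weightFiltration Mc σ p)
    (m : ℕ) : (ad k M v ^ m) u ∈ weightFiltration Mc σ (p + m) := by
  induction m with
  | zero => simpa using hu
  | succ m ih =>
    have hpm : p + ((m + 1 : ℕ) : ℤ) = 1 + (p + m) := by push_cast; ring
    rw [hpm, pow_succ', Module.End.mul_apply, ad_apply]
    exact lie_mem_weightFiltration hbr hv ih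

variable (hσ : σ = 1 ∨ σ = -1) (hbound : ∀ i : ℤ, 2 < |i| → Mc i = ⊥)
include hσ hbound

theorem weightFiltration_eq_top (htop : ⨆ j, Mc j = ⊤) : weightFiltration Mc σ (-2) = ⊤ := by
  refine top_le_iff.mp (htop ▸ iSup_le fun j => ?_)
  by_cases h : -2 ≤ σ * j
  · exact le_weightFiltration h
  · rw [hbound j (lt_abs.mpr (by rcases hσ with rfl | rfl <;> omega))]
    exact bot_le

theorem weightFiltration_three_eq_bot : weightFiltration Mc σ 3 = ⊥ :=
  le_bot_iff.mp <| iSup_le fun j =>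
    (hbound j (lt_abs.mpr (by have := j.2; rcases hσ with rfl | rfl <;> omega))).le

end WeightFiltration

section FiveGraded

variable {k : Type*} [Field k] {M : Type*} [LieRing M] [LieAlgebra k M]
  {Mc : ℤ → Submodule k M} {σ : ℤ}
  (hσ : σ = 1 ∨ σ = -1) (hbound : ∀ i : ℤ, 2 < |i| → Mc i = ⊥)
  (hbr : ∀ i j : ℤ, ∀ x ∈ Mc i, ∀ y ∈ Mc j, ⁅x, y⁆ ∈ Mc (i + j))
include hσ hbound hbr

theorem isNilpotent_ad_of_mem_weightFiltration (htop : ⨆ j, Mc j = ⊤) {v : M}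
    (hv : v ∈ weightFiltration Mc σ 1) : IsNilpotent (ad k M v) := by
  refine ⟨5, LinearMap.ext fun u => ?_⟩
  have hu := ad_pow_mem_weightFiltration hbr hv
    ((weightFiltration_eq_top hσ hbound htop).ge (Submodule.mem_top (x := u))) 5
  rw [show (-2 : ℤ) + (5 : ℕ) = 3 by norm_num, weightFiltration_three_eq_bot hσ hbound] at hu
  simpa using hu

theorem lie_ad_pow_eq_zero {v a b : M} {m n : ℤ} (hv : v ∈ weightFiltration Mc σ 1)
    (ha : a ∈ Mc m) (hb : b ∈ Mc n) (hmn : -2 ≤ σ * m + σ * n) {i j : ℕ} (hij : 5 ≤ i + j) :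
    ⁅(ad k M v ^ i) a, (ad k M v ^ j) b⁆ = 0 := by
  have hmem := lie_mem_weightFiltration hbr
    (ad_pow_mem_weightFiltration hbr hv (le_weightFiltration le_rfl ha) i)
    (ad_pow_mem_weightFiltration hbr hv (le_weightFiltration le_rfl hb) j)
  have h3 := weightFiltration_antitone (Mc := Mc) (σ := σ) (show (3 : ℤ) ≤ _ by omega) hmem
  rwa [weightFiltration_three_eq_bot hσ hbound, Submodule.mem_bot] at h3

theorem truncExp_ad_lie_of_neg_two_le (hfac : ∀ n < 5, (n.factorial : k) ≠ 0) {v a b : M}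
    {m n : ℤ} (hv : v ∈ weightFiltration Mc σ 1) (ha : a ∈ Mc m) (hb : b ∈ Mc n)
    (hmn : -2 ≤ σ * m + σ * n) :
    truncExp 5 (ad k M v) ⁅a, b⁆ = ⁅truncExp 5 (ad k M v) a, truncExp 5 (ad k M v) b⁆ :=
  truncExp_ad_lie hfac fun _ _ _ _ hij => lie_ad_pow_eq_zero hσ hbound hbr hv ha hb hmn hij

end FiveGraded

theorem abs_le_two_of_mem {k M : Type*} [Semiring k] [AddCommMonoid M] [Module k M]
    {Mc : ℤ → Submodule k M} (hbound : ∀ i : ℤ, 2 < |i| → Mc i = ⊥) {m : ℤ} {a : M}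
    (ha : a ∈ Mc m) (ha0 : a ≠ 0) : |m| ≤ 2 := by
  by_contra h
  exact ha0 (by simpa [hbound m (not_le.mp h)] using ha)

theorem eq_zero_or_weights_mem_of_add_le_neg_three {k M : Type*} [Semiring k]
    [AddCommMonoid M] [Module k M] {Mc : ℤ → Submodule k M} (hbound : ∀ i : ℤ, 2 < |i| → Mc i = ⊥)
    {σ m n : ℤ} (hσ : σ = 1 ∨ σ = -1) {a b : M} (ha : a ∈ Mc m) (hb : b ∈ Mc n)
    (hmn : σ * m + σ * n ≤ -3) :
    a = 0 ∨ b = 0 ∨ m ∈ ({1, -1, 2, -2} : Set ℤ) ∧ n ∈ ({1, -1, 2, -2} : Set ℤ) := by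
  rcases eq_or_ne a 0 with ha0 | ha0
  · exact .inl ha0
  rcases eq_or_ne b 0 with hb0 | hb0
  · exact .inr (.inl hb0)
  have hm := abs_le_two_of_mem hbound ha ha0
  have hn := abs_le_two_of_mem hbound hb hb0
  simp only [Set.mem_insert_iff, Set.mem_singleton_iff]
  rw [abs_le] at hm hn
  rcases hσ with rfl | rfl <;> omega

theorem lie_map_of_homogeneous {k ι M : Type*} [CommRing k] [LieRing M] [LieAlgebra k M]
    {Mc : ι → Submodule k M} (htop : ⨆ j, Mc j = ⊤) {E : Module.End k M}
    (hE : ∀ m n, ∀ a ∈ Mc m, ∀ b ∈ Mc n, E ⁅a, b⁆ = ⁅E a, E b⁆) (a b : M) :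
    E ⁅a, b⁆ = ⁅E a, E b⁆ := by
  have hmem : ∀ u : M, u ∈ ⨆ j, Mc j := fun u => htop ▸ Submodule.mem_top
  refine Submodule.iSup_induction _ (motive := fun a => E ⁅a, b⁆ = ⁅E a, E b⁆) (hmem a)
    (fun m a ha => ?_) (by simp) fun a₁ a₂ h₁ h₂ => by simp only [add_lie, map_add, h₁, h₂]
  exact Submodule.iSup_induction _ (motive := fun b => E ⁅a, b⁆ = ⁅E a, E b⁆) (hmem b)
    (fun n b hb => hE m n a ha b hb) (by simp) fun b₁ b₂ h₁ h₂ => by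
      simp only [lie_add, map_add, h₁, h₂]

theorem statement8_general
    (k : Type*) [Field k] (hchar2 : (2 : k) ≠ 0) (hchar3 : (3 : k) ≠ 0)
    (L : Type*) [LieRing L] [LieAlgebra k L]
    (L' : Type*) [LieRing L'] [LieAlgebra k L']
    (Lc : ℤ → Submodule k L)
    (Lc' : ℤ → Submodule k L')
    (hdirect' : DirectSum.IsInternal Lc')
    (hbracket' : ∀ i j : ℤ, ∀ x ∈ Lc' i, ∀ y ∈ Lc' j, ⁅x, y⁆ ∈ Lc' (i + j))
    (hbound' : ∀ i : ℤ, 2 < |i| → Lc' i = ⊥)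
    (f : L →ₗ⁅k⁆ L')
    (hgraded : ∀ i : ℤ, ∀ x ∈ Lc i, f x ∈ Lc' i)
    (hsurj : ∀ i ∈ ({1, -1, 2, -2} : Set ℤ), ∀ y ∈ Lc' i, ∃ x ∈ Lc i, f x = y)
    (σ : ℤ) (hσ : σ = 1 ∨ σ = -1)
    (x : L) (hx : x ∈ Lc σ) (s : L) (hs : s ∈ Lc (2 * σ))
    (halg : ∃ g : L ≃ₗ⁅k⁆ L, ∀ a : L,
      g a = (∑ i ∈ Finset.range 5,
        ((i.factorial : k)⁻¹) • (LieAlgebra.ad k L (x + s)) ^ i) a) :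
    ∃ g' : L' ≃ₗ⁅k⁆ L', ∀ a : L',
      g' a = (∑ i ∈ Finset.range 5,
        ((i.factorial : k)⁻¹) • (LieAlgebra.ad k L' (f x + f s)) ^ i) a := by
  obtain ⟨g, hg⟩ := halg
  set E := truncExp 5 (ad k L (x + s))
  set E' := truncExp 5 (ad k L' (f x + f s))
  have htop' := hdirect'.submodule_iSup_eq_top
  have hv' : f x + f s ∈ weightFiltration Lc' σ 1 :=
    add_mem (le_weightFiltration (by rcases hσ with rfl | rfl <;> norm_num) (hgraded σ x hx))
      (le_weightFiltration (by rcases hσ with rfl | rfl <;> norm_num) (hgraded _ s hs))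
  replace hg : ∀ a, g a = E a := hg
  have hE : ∀ a b, E ⁅a, b⁆ = ⁅E a, E b⁆ := fun a b => by simpa only [hg] using g.map_lie a b
  have hfE : ∀ a, f (E a) = E' (f a) := fun a =>
    (f.map_truncExp_ad_apply 5 (x + s) a).trans (by rw [map_add])
  have hE' : ∀ a b, E' ⁅a, b⁆ = ⁅E' a, E' b⁆ := by
    refine lie_map_of_homogeneous htop' fun m n a ha b hb => ?_
    by_cases hlow : σ * m + σ * n ≤ -3
    · obtain rfl | rfl | ⟨hm, hn⟩ :=
        eq_zero_or_weights_mem_of_add_le_neg_three hbound' hσ ha hb hlow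
      · simp
      · simp
      obtain ⟨a, -, rfl⟩ := hsurj m hm a ha
      obtain ⟨b, -, rfl⟩ := hsurj n hn b hb
      rw [← f.map_lie, ← hfE, hE, f.map_lie, hfE, hfE]
    · exact truncExp_ad_lie_of_neg_two_le hσ hbound' hbracket'
        (fun _ => natCast_factorial_ne_zero_of_lt_five hchar2 hchar3) hv' ha hb (by omega)
  have hunit : IsUnit E' := isUnit_truncExp (by norm_num)
    (isNilpotent_ad_of_mem_weightFiltration hσ hbound' hbracket' htop' hv')
  exact ⟨LieEquiv.ofBijective ⟨E', fun {a b} => hE' a b⟩ ((Module.End.isUnit_iff E').mp hunit),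
    fun _ => rfl⟩

/-- Let L, L' be finite-dimensional 5-graded Lie algebras over a field k of
characteristic ≠ 2, 3, and f : L → L' a graded Lie algebra homomorphism restricting to a
bijection L_i → L'_i for i ∈ {1, -1, 2, -2}.  If x + s (x ∈ L_σ, s ∈ L_{2σ}, σ ∈ {1,-1})
is algebraic in L, then f(x) + f(s) is algebraic in L'. -/
theorem statement8
    (k : Type*) [Field k] (hchar2 : (2 : k) ≠ 0) (hchar3 : (3 : k) ≠ 0)
    (L : Type*) [LieRing L] [LieAlgebra k L] [FiniteDimensional k L]
    (L' : Type*) [LieRing L'] [LieAlgebra k L'] [FiniteDimensional k L']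
    (Lc : ℤ → Submodule k L)
    (hdirect : DirectSum.IsInternal Lc)
    (hbracket : ∀ i j : ℤ, ∀ x ∈ Lc i, ∀ y ∈ Lc j, ⁅x, y⁆ ∈ Lc (i + j))
    (hbound : ∀ i : ℤ, 2 < |i| → Lc i = ⊥)
    (Lc' : ℤ → Submodule k L')
    (hdirect' : DirectSum.IsInternal Lc')
    (hbracket' : ∀ i j : ℤ, ∀ x ∈ Lc' i, ∀ y ∈ Lc' j, ⁅x, y⁆ ∈ Lc' (i + j))
    (hbound' : ∀ i : ℤ, 2 < |i| → Lc' i = ⊥)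
    (f : L →ₗ⁅k⁆ L')
    (hgraded : ∀ i : ℤ, ∀ x ∈ Lc i, f x ∈ Lc' i)
    (hsurj : ∀ i ∈ ({1, -1, 2, -2} : Set ℤ), ∀ y ∈ Lc' i, ∃ x ∈ Lc i, f x = y)
    (hinj : ∀ i ∈ ({1, -1, 2, -2} : Set ℤ), ∀ x ∈ Lc i, ∀ x' ∈ Lc i, f x = f x' → x = x')
    (σ : ℤ) (hσ : σ = 1 ∨ σ = -1)
    (x : L) (hx : x ∈ Lc σ) (s : L) (hs : s ∈ Lc (2 * σ))
    (halg : ∃ g : L ≃ₗ⁅k⁆ L, ∀ a : L,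
      g a = (∑ i ∈ Finset.range 5,
        ((i.factorial : k)⁻¹) • (LieAlgebra.ad k L (x + s)) ^ i) a) :
    ∃ g' : L' ≃ₗ⁅k⁆ L', ∀ a : L',
      g' a = (∑ i ∈ Finset.range 5,
        ((i.factorial : k)⁻¹) • (LieAlgebra.ad k L' (f x + f s)) ^ i) a :=
  statement8_general k hchar2 hchar3 L L' Lc Lc' hdirect' hbracket' hbound' f hgraded hsurj σ hσ x
    hx s hs halg
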